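/- Let K be a field of characteristic zero and A, B, Ã, B̃ ∈ K. There exists a unique power series S ∈ K[[x]] with S(0) = 0 and S'(0) = 1 satisfying (B·x⁶ + A·x⁴ + 1)·S'² = 1 + Ã·S⁴ + B̃·S⁶. Moreover S is odd, its coefficient of x³ vanishes, and S = x + ((Ã − A)/10)·x⁵ + ((B̃ − B)/14)·x⁷ + O(x⁹). -/

import Mathlib

/-!
Let `Φ(S) = (B x⁶ + A x⁴ + 1) S'² - (1 + Ã S⁴ + B̃ S⁶)`. If `S ≡ T mod x^(n+1)` and
`S'(0) = T'(0) = 1`, then the `xⁿ`-coefficients of `Φ(S)` and `Φ(T)` differ by exactly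
`2 (n + 1) (s_{n+1} - t_{n+1})`: the powers of `S` only see `S mod x^(n+1)`, and
`S'² - T'² = (S - T)' (S' + T')` with `(S' + T')(0) = 2`. Hence `Φ(S) = 0` fixes the
coefficients of `S` one at a time, which gives existence and uniqueness in characteristic zero.
Uniqueness applied to `-S(-x)` shows that `S` is odd, and comparing `S` with `x` and with
`x + s₅ x⁵` yields `s₃`, `s₅` and `s₇`.
-/

open PowerSeries

namespace PowerSeries

variable {R : Type*} [CommRing R]

theorem X_pow_succ_dvd_iff {n : ℕ} {f : R⟦X⟧} :
    X ^ (n + 1) ∣ f ↔ X ^ n ∣ f ∧ coeff n f = 0 := by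
  simp only [X_pow_dvd_iff, Nat.lt_succ_iff_lt_or_eq, or_imp, forall_and, forall_eq]

theorem coeff_pow_eq_of_X_pow_dvd_sub {n : ℕ} {S T : R⟦X⟧} (h : X ^ (n + 1) ∣ S - T)
    (k : ℕ) :
    coeff n (S ^ k) = coeff n (T ^ k) := by
  have := X_pow_dvd_iff.mp (h.trans (sub_dvd_pow_sub_pow S T k)) n n.lt_succ_self
  rwa [map_sub, sub_eq_zero] at this

theorem coeff_mul_of_X_pow_dvd {n : ℕ} {f : R⟦X⟧} (h : X ^ n ∣ f) (g : R⟦X⟧) :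
    coeff n (f * g) = coeff n f * constantCoeff g := by
  obtain ⟨u, rfl⟩ := h
  simp [mul_assoc, coeff_X_pow_mul']

theorem X_pow_dvd_derivative {n : ℕ} {f : R⟦X⟧} (h : X ^ (n + 1) ∣ f) :
    X ^ n ∣ d⁄dX R f := by
  rw [X_pow_dvd_iff] at h ⊢
  intro m hm
  rw [coeff_derivative, h (m + 1) (by omega), zero_mul]

theorem coeff_mul_derivative_sq_sub {n : ℕ} {S T : R⟦X⟧} (h : X ^ (n + 1) ∣ S - T)
    (q : R⟦X⟧) :
    coeff n (q * d⁄dX R S ^ 2) - coeff n (q * d⁄dX R T ^ 2)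
      = (coeff (n + 1) S - coeff (n + 1) T) * (n + 1)
        * constantCoeff (q * (d⁄dX R S + d⁄dX R T)) := by
  have hfactor : q * d⁄dX R S ^ 2 - q * d⁄dX R T ^ 2
      = d⁄dX R (S - T) * (q * (d⁄dX R S + d⁄dX R T)) := by
    rw [map_sub]; ring
  rw [← map_sub, hfactor, coeff_mul_of_X_pow_dvd (X_pow_dvd_derivative h), coeff_derivative,
    map_sub]

theorem constantCoeff_derivative (f : R⟦X⟧) : constantCoeff (d⁄dX R f) = coeff 1 f := by
  simpa using constantCoeff_iterate_derivative f 1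

theorem derivative_rescale (a : R) (f : R⟦X⟧) :
    d⁄dX R (rescale a f) = C a * rescale a (d⁄dX R f) := by
  ext n
  simp only [coeff_derivative, coeff_C_mul, coeff_rescale, pow_succ]
  ring

theorem rescale_C (a b : R) : rescale a (C b) = C b := by
  ext (_ | n) <;> simp [coeff_rescale, coeff_C]

end PowerSeries

namespace FastElkies

section CommRing

variable {R : Type*} [CommRing R]

noncomputable def elkiesResidual (A B At Bt : R) (S : R⟦X⟧) : R⟦X⟧ :=
  (C B * X ^ 6 + C A * X ^ 4 + 1) * d⁄dX R S ^ 2 - (1 + C At * S ^ 4 + C Bt * S ^ 6)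

variable {A B At Bt : R}

theorem elkiesResidual_X :
    elkiesResidual A B At Bt X = C (A - At) * X ^ 4 + C (B - Bt) * X ^ 6 := by
  simp only [elkiesResidual, derivative_X, map_sub]
  ring

theorem coeff_six_elkiesResidual_X_add_C_mul_X_pow_five (c : R) :
    coeff 6 (elkiesResidual A B At Bt (X + C c * X ^ 5)) = B - Bt := by
  have hd : d⁄dX R (X + C c * X ^ 5) = 1 + C (5 * c) * X ^ 4 := by
    rw [map_add, Derivation.leibniz, derivative_pow, derivative_X, derivative_C, map_mul]
    simp only [smul_eq_mul, map_ofNat]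
    ring
  rw [elkiesResidual, hd]
  ring_nf
  simp only [← map_ofNat C, ← map_pow, coeff_mul_C, coeff_C_mul, coeff_X_pow, map_add,
    map_sub]
  norm_num

variable (A B At Bt) in
theorem coeff_elkiesResidual_eq {n : ℕ} {S T : R⟦X⟧} (h : X ^ (n + 1) ∣ S - T)
    (hS : coeff 1 S = 1) (hT : coeff 1 T = 1) :
    coeff n (elkiesResidual A B At Bt S)
      = coeff n (elkiesResidual A B At Bt T)
        + 2 * (n + 1) * (coeff (n + 1) S - coeff (n + 1) T) := by
  have hq := coeff_mul_derivative_sq_sub h (C B * X ^ 6 + C A * X ^ 4 + 1)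
  have hconst :
      constantCoeff ((C B * X ^ 6 + C A * X ^ 4 + 1) * (d⁄dX R S + d⁄dX R T)) = 2 := by
    simp [constantCoeff_derivative, hS, hT, one_add_one_eq_two]
  rw [hconst] at hq
  simp only [elkiesResidual, map_sub, map_add, coeff_C_mul, coeff_pow_eq_of_X_pow_dvd_sub h]
  linear_combination hq

theorem elkiesResidual_neg_rescale_neg_one (S : R⟦X⟧) :
    elkiesResidual A B At Bt (-rescale (-1) S) = rescale (-1) (elkiesResidual A B At Bt S) := by
  have hq :
      rescale (-1 : R) (C B * X ^ 6 + C A * X ^ 4 + 1) = C B * X ^ 6 + C A * X ^ 4 + 1 := by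
    simp only [map_add, map_mul, map_pow, map_one, rescale_C, rescale_neg_one_X]
    ring
  simp only [elkiesResidual, map_sub, map_add, map_mul, map_pow, map_one, map_neg, rescale_C, hq,
    derivative_rescale]
  ring

end CommRing

section Domain

variable {R : Type*} [CommRing R] [IsDomain R] [CharZero R] {A B At Bt : R}

theorem eq_of_elkiesResidual_eq_zero {S T : R⟦X⟧} (h0 : constantCoeff S = constantCoeff T)
    (hS1 : coeff 1 S = 1) (hT1 : coeff 1 T = 1)
    (hS : elkiesResidual A B At Bt S = 0) (hT : elkiesResidual A B At Bt T = 0) : S = T := by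
  have hdvd : ∀ n, X ^ (n + 1) ∣ S - T := by
    intro n
    induction n with
    | zero => rwa [zero_add, pow_one, X_dvd_iff, map_sub, sub_eq_zero]
    | succ n ih =>
      have h := coeff_elkiesResidual_eq A B At Bt ih hS1 hT1
      rw [hS, hT, map_zero, zero_add, eq_comm, mul_eq_zero] at h
      exact X_pow_succ_dvd_iff.mpr ⟨ih, by rw [map_sub]; exact h.resolve_left (by norm_cast)⟩
  rw [← sub_eq_zero]
  ext n
  simpa using X_pow_dvd_iff.mp (hdvd n) n n.lt_succ_self

theorem coeff_eq_zero_of_even {S : R⟦X⟧} (h0 : constantCoeff S = 0) (h1 : coeff 1 S = 1)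
    (hS : elkiesResidual A B At Bt S = 0) {j : ℕ} (hj : Even j) : coeff j S = 0 := by
  have hsymm : -rescale (-1) S = S :=
    eq_of_elkiesResidual_eq_zero
      (by rw [map_neg, ← coeff_zero_eq_constantCoeff_apply, coeff_rescale]; simp [h0])
      (by simp [coeff_rescale, h1]) h1
      (by rw [elkiesResidual_neg_rescale_neg_one, hS, map_zero]) hS
  simpa [coeff_rescale, hj.neg_one_pow, CharZero.neg_eq_self_iff] using congrArg (coeff j) hsymm

end Domain

section Field

variable {K : Type*} [Field K] [CharZero K]

noncomputable def elkiesCoeff (A B At Bt : K) : ℕ → K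
  | 0 => 0
  | 1 => 1
  | m + 2 => -coeff (m + 1) (elkiesResidual A B At Bt
      (mk fun i => if _ : i < m + 2 then elkiesCoeff A B At Bt i else 0)) / (2 * (m + 2))

variable {A B At Bt : K}

theorem elkiesResidual_mk_elkiesCoeff :
    elkiesResidual A B At Bt (mk (elkiesCoeff A B At Bt)) = 0 := by
  set S := mk (elkiesCoeff A B At Bt)
  have hS1 : coeff 1 S = 1 := by simp [S, elkiesCoeff]
  ext (_ | m)
  · have hSX : X ^ (0 + 1) ∣ S - X := by simp [X_dvd_iff, S, elkiesCoeff]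
    rw [coeff_elkiesResidual_eq A B At Bt hSX hS1 coeff_one_X, elkiesResidual_X]
    simp [hS1]
  · set P := mk fun i => if _ : i < m + 2 then elkiesCoeff A B At Bt i else 0
    have hSP : X ^ (m + 1 + 1) ∣ S - P := X_pow_dvd_iff.mpr fun i hi => by simp [S, P, hi]
    have hP1 : coeff 1 P = 1 := by simp [P, elkiesCoeff]
    have hSm :
        coeff (m + 2) S = -coeff (m + 1) (elkiesResidual A B At Bt P) / (2 * (m + 2)) := by
      simp [S, P, elkiesCoeff]
    have hPm : coeff (m + 2) P = 0 := by simp [P]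
    have hm : (m : K) + 2 ≠ 0 := by norm_cast
    rw [coeff_elkiesResidual_eq A B At Bt hSP hS1 hP1, hSm, hPm, map_zero]
    push_cast
    field_simp
    ring

theorem coeff_three_five_seven_of_elkiesResidual_eq_zero {S : K⟦X⟧}
    (h0 : constantCoeff S = 0) (h1 : coeff 1 S = 1) (hS : elkiesResidual A B At Bt S = 0) :
    coeff 3 S = 0 ∧ coeff 5 S = (At - A) / 10 ∧ coeff 7 S = (Bt - B) / 14 := by
  have step {n : ℕ} {T : K⟦X⟧} (hT : X ^ (n + 1) ∣ S - T) (hT1 : coeff 1 T = 1) :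
      coeff n (elkiesResidual A B At Bt T) + 2 * (n + 1) * (coeff (n + 1) S - coeff (n + 1) T)
        = 0 := by
    rw [← coeff_elkiesResidual_eq A B At Bt hT h1 hT1, hS, map_zero]
  have hodd : ∀ j, Even j → coeff j S = 0 := fun j => coeff_eq_zero_of_even h0 h1 hS
  have h2 := hodd 2 (by decide)
  have h4 := hodd 4 (by decide)
  have h6 := hodd 6 (by decide)
  have h3 : coeff 3 S = 0 := by
    have hSX : X ^ (2 + 1) ∣ S - X := X_pow_dvd_iff.mpr fun i hi => by
      interval_cases i <;> simp [coeff_X, h0, h1, h2]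
    have h := step hSX coeff_one_X
    rw [elkiesResidual_X, map_add, coeff_C_mul_X_pow, coeff_C_mul_X_pow] at h
    norm_num [coeff_X] at h
    exact h
  have h5 : coeff 5 S = (At - A) / 10 := by
    have hSX : X ^ (4 + 1) ∣ S - X := X_pow_dvd_iff.mpr fun i hi => by
      interval_cases i <;> simp [coeff_X, h0, h1, h2, h3, h4]
    have h := step hSX coeff_one_X
    rw [elkiesResidual_X, map_add, coeff_C_mul_X_pow, coeff_C_mul_X_pow] at h
    norm_num [coeff_X] at h
    linear_combination h / 10
  have h7 : coeff 7 S = (Bt - B) / 14 := by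
    have hST : X ^ (6 + 1) ∣ S - (X + C (coeff 5 S) * X ^ 5) :=
      X_pow_dvd_iff.mpr fun i hi => by interval_cases i <;> simp [coeff_X, h0, h1, h2, h3, h4, h6]
    have h := step hST (by simp)
    rw [coeff_six_elkiesResidual_X_add_C_mul_X_pow_five] at h
    norm_num [coeff_C_mul_X_pow, coeff_X] at h
    linear_combination h / 14
  exact ⟨h3, h5, h7⟩

end Field
end FastElkies

open FastElkies in
/-- The central series of the algorithms fastElkies and fastElkies′: over a field of
characteristic zero there is a unique power series `S` with `S(0) = 0`, `S'(0) = 1` and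
`(B·x⁶ + A·x⁴ + 1)·S'² = 1 + Ã·S⁴ + B̃·S⁶`; moreover `S` is odd, its coefficient of
`x³` vanishes, and `S = x + ((Ã−A)/10)·x⁵ + ((B̃−B)/14)·x⁷ + O(x⁹)`. -/
theorem fastElkies_S_exists_unique {K : Type*} [Field K] [CharZero K] (A B At Bt : K) :
    (∃! S : PowerSeries K, constantCoeff S = 0 ∧ coeff 1 S = 1 ∧
      (C B * X ^ 6 + C A * X ^ 4 + 1) * (d⁄dX K S) ^ 2
        = 1 + C At * S ^ 4 + C Bt * S ^ 6) ∧
    ∀ S : PowerSeries K, constantCoeff S = 0 → coeff 1 S = 1 →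
      (C B * X ^ 6 + C A * X ^ 4 + 1) * (d⁄dX K S) ^ 2
        = 1 + C At * S ^ 4 + C Bt * S ^ 6 →
      (∀ j, Even j → coeff j S = 0) ∧ coeff 3 S = 0 ∧
        coeff 5 S = (At - A) / 10 ∧ coeff 7 S = (Bt - B) / 14 := by
  have hres (S : K⟦X⟧) : elkiesResidual A B At Bt S = 0 ↔
      (C B * X ^ 6 + C A * X ^ 4 + 1) * (d⁄dX K S) ^ 2 = 1 + C At * S ^ 4 + C Bt * S ^ 6 :=
    sub_eq_zero
  simp only [← hres]
  have hE0 : constantCoeff (mk (elkiesCoeff A B At Bt)) = 0 := by simp [elkiesCoeff]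
  have hE1 : coeff 1 (mk (elkiesCoeff A B At Bt)) = 1 := by simp [elkiesCoeff]
  refine ⟨⟨mk (elkiesCoeff A B At Bt), ⟨hE0, hE1, elkiesResidual_mk_elkiesCoeff⟩, ?_⟩,
    ?_⟩
  · rintro T ⟨hT0, hT1, hT⟩
    exact eq_of_elkiesResidual_eq_zero (hT0.trans hE0.symm) hT1 hE1 hT
      elkiesResidual_mk_elkiesCoeff
  · intro S h0 h1 hS
    exact ⟨fun j => coeff_eq_zero_of_even h0 h1 hS,
      coeff_three_five_seven_of_elkiesResidual_eq_zero h0 h1 hS⟩
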